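/- Let G = (V,E) be a graph in which every vertex not in C' has degree at least 2, with C' a vertex modulator of G to chair-free graphs, and let u,v,w be a C'-bad induced P3 with middle vertex v. Then G has a monopolar partition extending (C', ∅) if and only if G − v has a monopolar partition extending (C', ∅). -/

import Mathlib

open SimpleGraph

variable {V : Type*}

def IsIndepSet (G : SimpleGraph V) (I : Set V) : Prop :=
  ∀ ⦃u v : V⦄, u ∈ I → v ∈ I → ¬ G.Adj u v

def IsClusterSet (G : SimpleGraph V) (C : Set V) : Prop :=
  ∀ ⦃u v w : V⦄, u ∈ C → v ∈ C → w ∈ C → G.Adj u v → G.Adj v w → u ≠ w → G.Adj u w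

def IsMonopolarPartition (G : SimpleGraph V) (C I : Set V) : Prop :=
  Disjoint C I ∧ C ∪ I = Set.univ ∧ IsClusterSet G C ∧ _root_.IsIndepSet G I

def openNbhd (G : SimpleGraph V) (S : Set V) : Set V :=
  {v | v ∉ S ∧ ∃ u ∈ S, G.Adj u v}

def IsChair (G : SimpleGraph V) (a b c d e : V) : Prop :=
  a ≠ b ∧ a ≠ c ∧ a ≠ d ∧ a ≠ e ∧ b ≠ c ∧ b ≠ d ∧ b ≠ e ∧ c ≠ d ∧ c ≠ e ∧ d ≠ e ∧
  G.Adj a b ∧ G.Adj b c ∧ G.Adj b d ∧ G.Adj d e ∧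
  ¬ G.Adj a c ∧ ¬ G.Adj a d ∧ ¬ G.Adj a e ∧ ¬ G.Adj c d ∧ ¬ G.Adj c e ∧ ¬ G.Adj b e

def ChairFreeAfter (G : SimpleGraph V) (X : Set V) : Prop :=
  ¬ ∃ a b c d e : V, a ∉ X ∧ b ∉ X ∧ c ∉ X ∧ d ∉ X ∧ e ∉ X ∧ IsChair G a b c d e

def IsClaw (G : SimpleGraph V) (u v w x : V) : Prop :=
  v ≠ w ∧ v ≠ x ∧ w ≠ x ∧
  G.Adj u v ∧ G.Adj u w ∧ G.Adj u x ∧ ¬ G.Adj v w ∧ ¬ G.Adj v x ∧ ¬ G.Adj w x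

def ClawFreeAfter (G : SimpleGraph V) (X : Set V) : Prop :=
  ¬ ∃ u v w x : V, u ∉ X ∧ v ∉ X ∧ w ∉ X ∧ x ∉ X ∧ IsClaw G u v w x

def IsInducedC4 (G : SimpleGraph V) (p q r s : V) : Prop :=
  p ≠ q ∧ p ≠ r ∧ p ≠ s ∧ q ≠ r ∧ q ≠ s ∧ r ≠ s ∧
  G.Adj p q ∧ G.Adj q r ∧ G.Adj r s ∧ G.Adj s p ∧ ¬ G.Adj p r ∧ ¬ G.Adj q s

def IsCBadP3 (G : SimpleGraph V) (C' : Set V) (u v w : V) : Prop :=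
  u ≠ w ∧ G.Adj u v ∧ G.Adj v w ∧ ¬ G.Adj u w ∧
  (∀ x : V, (x = u ∨ x = v ∨ x = w ∨ G.Adj u x ∨ G.Adj v x ∨ G.Adj w x) → x ∉ C') ∧
  (∀ p : V, (p = u ∨ p = v ∨ p = w) → ¬ ∃ x y : V, G.Adj p x ∧ G.Adj p y ∧ G.Adj x y) ∧
  (¬ ∃ x y : V, IsInducedC4 G u v x y) ∧ (¬ ∃ x y : V, IsInducedC4 G v w x y)

/-!
Write a–b–{c, d–e} for the chair with edges ab, bc, bd, de. Suppose v had a third neighbour x,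
and let e ≠ v be another neighbour of u. Then w–v–{x, u–e} is a chair outside C': the non-edge
xe holds because otherwise u–v–{w, x–e} would be one, and the other non-edges come from the
absence of triangles and induced C4s around the bad P3. Hence N(v) = {u, w}. Now take a
monopolar partition (C, I) of G − v. If u, w ∈ C, put v into I; if u, w ∈ I, put v into C. If
u ∈ C and w ∈ I, the chairs v–u–{c, y–f} and v–u–{y, c–g} show that u cannot have both a
neighbour c ∈ C and a neighbour y ∈ I: every neighbour g ≠ u of c would lie in C', hence in the
cluster of u, while no neighbour of u lies in C'. So either u is isolated in G[C] and v joins C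
as a pendant of u, or u has no neighbour in I and u, v trade sides.
-/

open Set

variable {G : SimpleGraph V}

lemma SimpleGraph.neighborSet_nontrivial_of_two_le_degree {x : V} [Fintype (G.neighborSet x)]
    (h : 2 ≤ G.degree x) : (G.neighborSet x).Nontrivial := by
  rw [← G.coe_neighborFinset]
  exact Finset.one_lt_card_iff_nontrivial.mp h

lemma isChair_of_adj {a b c d e : V} (hac : a ≠ c) (hab : G.Adj a b) (hbc : G.Adj b c)
    (hbd : G.Adj b d) (hde : G.Adj d e) (hnac : ¬ G.Adj a c) (hnad : ¬ G.Adj a d)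
    (hnae : ¬ G.Adj a e) (hncd : ¬ G.Adj c d) (hnce : ¬ G.Adj c e) (hnbe : ¬ G.Adj b e) :
    IsChair G a b c d e := by
  refine ⟨hab.ne, hac, ?_, ?_, hbc.ne, hbd.ne, ?_, ?_, ?_, hde.ne,
    hab, hbc, hbd, hde, hnac, hnad, hnae, hncd, hnce, hnbe⟩
  · rintro rfl; exact hnae hde
  · rintro rfl; exact hnad hde.symm
  · rintro rfl; exact hnae hab
  · rintro rfl; exact hnce hde
  · rintro rfl; exact hncd hde.symm

lemma isInducedC4_of_adj {p q r s : V} (hpr : p ≠ r) (hqs : q ≠ s) (hpq : G.Adj p q)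
    (hqr : G.Adj q r) (hrs : G.Adj r s) (hsp : G.Adj s p) (hnpr : ¬ G.Adj p r)
    (hnqs : ¬ G.Adj q s) : IsInducedC4 G p q r s :=
  ⟨hpq.ne, hpr, hsp.ne', hqr.ne, hqs, hrs.ne, hpq, hqr, hrs, hsp, hnpr, hnqs⟩

lemma IsInducedC4.symm {p q r s : V} (h : IsInducedC4 G p q r s) : IsInducedC4 G q p s r := by
  obtain ⟨-, hpr, -, -, hqs, -, hpq, hqr, hrs, hsp, hnpr, hnqs⟩ := h
  exact isInducedC4_of_adj hqs hpr hpq.symm hsp.symm hrs.symm hqr.symm hnqs hnpr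

lemma ChairFreeAfter.not_isChair {X : Set V} (h : ChairFreeAfter G X) {a b c d e : V}
    (ha : a ∉ X) (hb : b ∉ X) (hc : c ∉ X) (hd : d ∉ X) (he : e ∉ X) :
    ¬ IsChair G a b c d e :=
  fun hchair => h ⟨a, b, c, d, e, ha, hb, hc, hd, he, hchair⟩

lemma IsClusterSet.subset {C D : Set V} (hC : IsClusterSet G C) (hDC : D ⊆ C) :
    IsClusterSet G D :=
  fun _ _ _ hx hy hz => hC (hDC hx) (hDC hy) (hDC hz)

lemma IsIndepSet.subset {I J : Set V} (hI : _root_.IsIndepSet G I) (hJI : J ⊆ I) :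
    _root_.IsIndepSet G J :=
  fun _ _ hx hy => hI (hJI hx) (hJI hy)

lemma IsClusterSet.insert_of_pendant {C : Set V} {u v : V} (hC : IsClusterSet G C)
    (hv : ∀ z ∈ C, G.Adj v z → z = u) (hu : u ∈ C → ∀ z ∈ C, ¬ G.Adj u z) :
    IsClusterSet G (insert v C) := by
  rintro a b c (rfl | ha) (rfl | hb) (rfl | hc) hab hbc hac
  · exact absurd hab G.irrefl
  · exact absurd hab G.irrefl
  · exact absurd rfl hac
  · obtain rfl := hv b hb hab
    exact absurd hbc (hu hb c hc)
  · exact absurd hbc G.irrefl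
  · exact absurd ((hv a ha hab.symm).trans (hv c hc hbc).symm) hac
  · obtain rfl := hv b hb hbc.symm
    exact absurd hab.symm (hu hb a ha)
  · exact hC ha hb hc hab hbc hac

lemma IsIndepSet.insert {I : Set V} {v : V} (hI : _root_.IsIndepSet G I)
    (hv : ∀ y ∈ I, ¬ G.Adj v y) : _root_.IsIndepSet G (insert v I) := by
  rintro a b (rfl | ha) (rfl | hb) hab
  · exact G.irrefl hab
  · exact hv b hb hab
  · exact hv a ha hab.symm
  · exact hI ha hb hab

lemma exists_monopolar_of_compl {C' D : Set V} (hC'D : C' ⊆ D) (hD : IsClusterSet G D)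
    (hDc : _root_.IsIndepSet G Dᶜ) : ∃ C I, IsMonopolarPartition G C I ∧ C' ⊆ C :=
  ⟨D, Dᶜ, ⟨disjoint_compl_right, union_compl_self D, hD, hDc⟩, hC'D⟩

lemma exists_monopolar_insert_indep {C' C : Set V} {v : V} (hvC : v ∉ C)
    (hC : IsClusterSet G C) (hI : _root_.IsIndepSet G (insert v C)ᶜ) (hC'C : C' ⊆ C)
    (hv : ∀ z, G.Adj v z → z ∈ C) : ∃ C I, IsMonopolarPartition G C I ∧ C' ⊆ C := by
  have hCc : Cᶜ = insert v (insert v C)ᶜ := by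
    ext x
    simp only [mem_compl_iff, mem_insert_iff]
    by_cases hx : x = v <;> simp_all
  refine exists_monopolar_of_compl hC'C hC ?_
  rw [hCc]
  exact hI.insert fun y hy hvy => hy (Or.inr (hv y hvy))

lemma exists_monopolar_insert_cluster {C' C : Set V} {u v : V} (hC : IsClusterSet G C)
    (hI : _root_.IsIndepSet G (insert v C)ᶜ) (hC'C : C' ⊆ C)
    (hv : ∀ z ∈ C, G.Adj v z → z = u) (hu : u ∈ C → ∀ z ∈ C, ¬ G.Adj u z) :
    ∃ C I, IsMonopolarPartition G C I ∧ C' ⊆ C :=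
  exists_monopolar_of_compl (hC'C.trans (subset_insert v C)) (hC.insert_of_pendant hv hu) hI

lemma exists_monopolar_exchange {C' C : Set V} {u v : V} (hvC : v ∉ C) (hC : IsClusterSet G C)
    (hI : _root_.IsIndepSet G (insert v C)ᶜ) (hC'C : C' ⊆ C) (huC : u ∈ C) (huC' : u ∉ C')
    (hv : ∀ z ∈ C, G.Adj v z → z = u) (hu : ∀ y ∉ insert v C, ¬ G.Adj u y) :
    ∃ C I, IsMonopolarPartition G C I ∧ C' ⊆ C := by
  have huv : u ≠ v := fun huv => hvC (huv ▸ huC)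
  have hDc : (insert v (C \ {u}))ᶜ = insert u (insert v C)ᶜ := by
    ext x
    simp only [mem_compl_iff, mem_insert_iff, mem_sdiff, mem_singleton_iff]
    by_cases hx : x = u <;> simp_all
  refine exists_monopolar_of_compl (D := insert v (C \ {u}))
    (fun x hx => Or.inr ⟨hC'C hx, fun hxu => huC' (hxu ▸ hx)⟩)
    ((hC.subset sdiff_subset).insert_of_pendant (fun z hz => hv z hz.1) fun hu' => absurd rfl hu'.2)
    ?_
  rw [hDc]
  exact hI.insert hu

lemma eq_compl_insert_of_union_eq {C I : Set V} {v : V} (hdisj : Disjoint C I)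
    (hunion : C ∪ I = {v}ᶜ) : I = (insert v C)ᶜ := by
  ext x
  have hx := Set.ext_iff.mp hunion x
  have hxCI : x ∈ C → x ∉ I := fun h => Set.disjoint_left.mp hdisj h
  simp only [mem_union, mem_compl_iff, mem_singleton_iff, mem_insert_iff] at hx ⊢
  tauto

namespace IsCBadP3

variable {C' : Set V} {u v w : V}

lemma symm (h : IsCBadP3 G C' u v w) : IsCBadP3 G C' w v u := by
  obtain ⟨huw, huv, hvw, hnuw, hC', htri, hC4u, hC4w⟩ := h
  exact ⟨huw.symm, hvw.symm, huv.symm, fun h => hnuw h.symm, fun x hx => hC' x (by tauto),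
    fun p hp => htri p (by tauto), fun ⟨x, y, hC4⟩ => hC4w ⟨y, x, hC4.symm⟩,
    fun ⟨x, y, hC4⟩ => hC4u ⟨y, x, hC4.symm⟩⟩

lemma left_notMem (h : IsCBadP3 G C' u v w) : u ∉ C' := h.2.2.2.2.1 u (Or.inl rfl)

lemma mid_notMem (h : IsCBadP3 G C' u v w) : v ∉ C' := h.2.2.2.2.1 v (by tauto)

lemma notMem_of_adj_left (h : IsCBadP3 G C' u v w) {x : V} (hx : G.Adj u x) : x ∉ C' :=
  h.2.2.2.2.1 x (by tauto)

lemma notMem_of_adj_mid (h : IsCBadP3 G C' u v w) {x : V} (hx : G.Adj v x) : x ∉ C' :=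
  h.2.2.2.2.1 x (by tauto)

lemma not_adj_of_adj_left (h : IsCBadP3 G C' u v w) {x y : V} (hx : G.Adj u x)
    (hy : G.Adj u y) : ¬ G.Adj x y :=
  fun hxy => h.2.2.2.2.2.1 u (Or.inl rfl) ⟨x, y, hx, hy, hxy⟩

lemma not_adj_of_adj_mid (h : IsCBadP3 G C' u v w) {x y : V} (hx : G.Adj v x)
    (hy : G.Adj v y) : ¬ G.Adj x y :=
  fun hxy => h.2.2.2.2.2.1 v (by tauto) ⟨x, y, hx, hy, hxy⟩

lemma not_isInducedC4_left (h : IsCBadP3 G C' u v w) (x y : V) : ¬ IsInducedC4 G u v x y :=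
  fun hC4 => h.2.2.2.2.2.2.1 ⟨x, y, hC4⟩

lemma not_isInducedC4_right (h : IsCBadP3 G C' u v w) (x y : V) : ¬ IsInducedC4 G v w x y :=
  fun hC4 => h.2.2.2.2.2.2.2 ⟨x, y, hC4⟩

lemma not_adj_right_of_adj_left (h : IsCBadP3 G C' u v w) {x : V} (hx : G.Adj u x)
    (hxv : x ≠ v) : ¬ G.Adj w x := fun hwx =>
  h.not_isInducedC4_left w x <| isInducedC4_of_adj h.1 hxv.symm h.2.1 h.2.2.1 hwx hx.symm
    h.2.2.2.1 (h.not_adj_of_adj_left h.2.1 hx)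

lemma mem_of_adj_of_adj_mid (hmod : ChairFreeAfter G C') (h : IsCBadP3 G C' u v w) {x e : V}
    (hvx : G.Adj v x) (hxu : x ≠ u) (hxw : x ≠ w) (hxe : G.Adj x e) (hev : e ≠ v) :
    e ∈ C' := by
  have ⟨huw, huv, hvw, hnuw, _⟩ := h
  by_contra he
  have hnux := h.not_adj_of_adj_mid huv.symm hvx
  have hnwx := h.not_adj_of_adj_mid hvw hvx
  have hnve : ¬ G.Adj v e := fun hve => h.not_adj_of_adj_mid hvx hve hxe
  have hnue : ¬ G.Adj u e := fun hue => h.not_isInducedC4_left x e <|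
    isInducedC4_of_adj hxu.symm hev.symm huv hvx hxe hue.symm hnux hnve
  have hnwe : ¬ G.Adj w e := fun hwe => h.not_isInducedC4_right e x <|
    isInducedC4_of_adj hev.symm hxw.symm hvw hwe hxe.symm hvx.symm hnve hnwx
  exact hmod.not_isChair h.left_notMem h.mid_notMem h.symm.left_notMem (h.notMem_of_adj_mid hvx)
    he (isChair_of_adj huw huv hvw hvx hxe hnuw hnux hnue hnwx hnwe hnve)

lemma eq_or_eq_of_adj_mid (hdeg : ∀ x ∉ C', (G.neighborSet x).Nontrivial)
    (hmod : ChairFreeAfter G C') (h : IsCBadP3 G C' u v w) ⦃x : V⦄ (hvx : G.Adj v x) :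
    x = u ∨ x = w := by
  have ⟨_, huv, hvw, hnuw, _⟩ := h
  by_contra! hx
  obtain ⟨e, hue, hev⟩ := (hdeg u h.left_notMem).exists_ne v
  rw [mem_neighborSet] at hue
  have hnxe : ¬ G.Adj x e := fun hxe =>
    h.notMem_of_adj_left hue (h.mem_of_adj_of_adj_mid hmod hvx hx.1 hx.2 hxe hev)
  exact hmod.not_isChair h.symm.left_notMem h.mid_notMem (h.notMem_of_adj_mid hvx)
    h.left_notMem (h.notMem_of_adj_left hue) (isChair_of_adj hx.2.symm hvw.symm hvx huv.symm hue
      (h.not_adj_of_adj_mid hvw hvx) (fun hwu => hnuw hwu.symm)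
      (h.not_adj_right_of_adj_left hue hev) (fun hxu => h.not_adj_of_adj_mid huv.symm hvx hxu.symm)
      hnxe (h.not_adj_of_adj_left huv hue))

section Partition

variable {C : Set V}

lemma mem_of_adj_of_adj_indep (hmod : ChairFreeAfter G C') (h : IsCBadP3 G C' u v w)
    (hN : ∀ ⦃z⦄, G.Adj v z → z = u ∨ z = w) (hvC : v ∉ C) (hC : IsClusterSet G C)
    (hI : _root_.IsIndepSet G (insert v C)ᶜ) (huC : u ∈ C) {c y f : V} (hc : c ∈ C)
    (huc : G.Adj u c) (hy : y ∉ insert v C) (huy : G.Adj u y) (hyf : G.Adj y f) (hfu : f ≠ u) :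
    f ∈ C' := by
  by_contra hf
  have huv := h.2.1
  have hyv : y ≠ v := fun hyv => hy (Or.inl hyv)
  have hnuf : ¬ G.Adj u f := fun huf => h.not_adj_of_adj_left huy huf hyf
  have hfC : f ∈ C := by
    by_contra hfC
    refine hI hy ?_ hyf
    rintro (rfl | hfC')
    · exact h.not_adj_of_adj_left huv huy hyf.symm
    · exact hfC hfC'
  have hnvf : ¬ G.Adj v f := fun hvf => by
    rcases hN hvf with rfl | rfl
    · exact hfu rfl
    · exact h.not_adj_right_of_adj_left huy hyv hyf.symm
  have hncf : ¬ G.Adj c f := fun hcf => hnuf (hC huC hc hfC huc hcf hfu.symm)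
  exact hmod.not_isChair h.mid_notMem h.left_notMem (h.notMem_of_adj_left huc)
    (h.notMem_of_adj_left huy) hf (isChair_of_adj (fun hvc => hvC (hvc ▸ hc)) huv.symm huc huy
      hyf (h.not_adj_of_adj_left huv huc) (h.not_adj_of_adj_left huv huy) hnvf
      (h.not_adj_of_adj_left huc huy) hncf hnuf)

lemma mem_of_adj_of_adj_cluster (hmod : ChairFreeAfter G C') (h : IsCBadP3 G C' u v w)
    (hN : ∀ ⦃z⦄, G.Adj v z → z = u ∨ z = w) (hvC : v ∉ C) (hC : IsClusterSet G C)
    (hI : _root_.IsIndepSet G (insert v C)ᶜ) (huC : u ∈ C) {c y g : V} (hc : c ∈ C)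
    (huc : G.Adj u c) (hy : y ∉ insert v C) (huy : G.Adj u y) (hcg : G.Adj c g) (hgu : g ≠ u) :
    g ∈ C' := by
  by_contra hg
  have huv := h.2.1
  have hcv : c ≠ v := fun hcv => hvC (hcv ▸ hc)
  have hnyg : ¬ G.Adj y g := fun hyg =>
    hg (h.mem_of_adj_of_adj_indep hmod hN hvC hC hI huC hc huc hy huy hyg hgu)
  have hnvg : ¬ G.Adj v g := fun hvg => by
    rcases hN hvg with rfl | rfl
    · exact hgu rfl
    · exact h.not_adj_right_of_adj_left huc hcv hcg.symm
  exact hmod.not_isChair h.mid_notMem h.left_notMem (h.notMem_of_adj_left huy)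
    (h.notMem_of_adj_left huc) hg (isChair_of_adj (fun hvy => hy (Or.inl hvy.symm)) huv.symm huy
      huc hcg (h.not_adj_of_adj_left huv huy) (h.not_adj_of_adj_left huv huc) hnvg
      (h.not_adj_of_adj_left huy huc) hnyg (fun hug => h.not_adj_of_adj_left huc hug hcg))

lemma forall_not_adj_or_forall_not_adj (hdeg : ∀ x ∉ C', (G.neighborSet x).Nontrivial)
    (hmod : ChairFreeAfter G C') (h : IsCBadP3 G C' u v w) (hvC : v ∉ C)
    (hC : IsClusterSet G C) (hI : _root_.IsIndepSet G (insert v C)ᶜ) (hC'C : C' ⊆ C)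
    (huC : u ∈ C) : (∀ c ∈ C, ¬ G.Adj u c) ∨ ∀ y ∉ insert v C, ¬ G.Adj u y := by
  by_contra! hcon
  obtain ⟨⟨c, hc, huc⟩, y, hy, huy⟩ := hcon
  obtain ⟨g, hcg, hgu⟩ := (hdeg c (h.notMem_of_adj_left huc)).exists_ne u
  have hg : g ∈ C' := h.mem_of_adj_of_adj_cluster hmod (h.eq_or_eq_of_adj_mid hdeg hmod)
    hvC hC hI huC hc huc hy huy hcg hgu
  exact h.notMem_of_adj_left (hC huC hc (hC'C hg) huc hcg hgu.symm) hg

lemma exists_monopolar_of_mem_of_notMem (hdeg : ∀ x ∉ C', (G.neighborSet x).Nontrivial)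
    (hmod : ChairFreeAfter G C') (h : IsCBadP3 G C' u v w) (hvC : v ∉ C)
    (hC : IsClusterSet G C) (hI : _root_.IsIndepSet G (insert v C)ᶜ) (hC'C : C' ⊆ C)
    (huC : u ∈ C) (hwC : w ∉ C) : ∃ C I, IsMonopolarPartition G C I ∧ C' ⊆ C := by
  have hv : ∀ z ∈ C, G.Adj v z → z = u := fun z hz hvz =>
    (h.eq_or_eq_of_adj_mid hdeg hmod hvz).resolve_right fun hzw => hwC (hzw ▸ hz)
  rcases h.forall_not_adj_or_forall_not_adj hdeg hmod hvC hC hI hC'C huC with hiso | hnoI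
  · exact exists_monopolar_insert_cluster hC hI hC'C hv fun _ => hiso
  · exact exists_monopolar_exchange hvC hC hI hC'C huC h.left_notMem hv hnoI

end Partition

end IsCBadP3

theorem stmt13 [Fintype V] (G : SimpleGraph V) [DecidableRel G.Adj] (C' : Set V)
    (hdeg : ∀ x : V, x ∉ C' → 2 ≤ G.degree x)
    (hmod : ChairFreeAfter G C') (u v w : V) (hbad : IsCBadP3 G C' u v w) :
    (∃ C I : Set V, IsMonopolarPartition G C I ∧ C' ⊆ C) ↔
    (∃ C I : Set V, Disjoint C I ∧ C ∪ I = {v}ᶜ ∧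
      IsClusterSet G C ∧ _root_.IsIndepSet G I ∧ C' ⊆ C) := by
  constructor
  · rintro ⟨C, I, ⟨hdisj, hunion, hC, hI⟩, hC'C⟩
    refine ⟨C \ {v}, I \ {v}, hdisj.mono sdiff_subset sdiff_subset, ?_, hC.subset sdiff_subset,
      hI.subset sdiff_subset, subset_sdiff_singleton hC'C hbad.mid_notMem⟩
    rw [← union_sdiff_distrib, hunion, compl_eq_univ_sdiff]
  · rintro ⟨C, I, hdisj, hunion, hC, hI, hC'C⟩
    have hvC : v ∉ C := fun hv => by simpa using hunion.subset (Or.inl hv)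
    obtain rfl := eq_compl_insert_of_union_eq hdisj hunion
    have hdeg' : ∀ x ∉ C', (G.neighborSet x).Nontrivial := fun x hx =>
      G.neighborSet_nontrivial_of_two_le_degree (hdeg x hx)
    have hN := hbad.eq_or_eq_of_adj_mid hdeg' hmod
    by_cases huC : u ∈ C <;> by_cases hwC : w ∈ C
    · exact exists_monopolar_insert_indep hvC hC hI hC'C fun z hvz =>
        (hN hvz).elim (· ▸ huC) (· ▸ hwC)
    · exact hbad.exists_monopolar_of_mem_of_notMem hdeg' hmod hvC hC hI hC'C huC hwC
    · exact hbad.symm.exists_monopolar_of_mem_of_notMem hdeg' hmod hvC hC hI hC'C hwC huC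
    · exact exists_monopolar_insert_cluster hC hI hC'C
        (fun z hz hvz => (hN hvz).resolve_right fun hzw => hwC (hzw ▸ hz)) (absurd · huC)
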